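/- arXiv:2301.13497 — 4 statements merged into one kernel-verified Lean document; each statement's English description precedes it below -/
import Mathlib

section
/- For every m ≥ 6, the weight spectrum of RM(m-3,m) equals the set of all even integers in [0, 2^m] except {2, 4, 6, 10, 2^m−10, 2^m−6, 2^m−4, 2^m−2}; equivalently it equals {0, 8} ∪ {12, 14, 16, …, 2^m−12} ∪ {2^m−8, 2^m}. -/
/-!
Write `F u = ∑ₓ f x (-1)^(u ⬝ᵥ x)` for the Walsh coefficients of (the `0/1` lift of) a codeword
`f` of `RM(r, m)`, `r + 3 ≤ m`. Such an `f` is orthogonal to every quadratic polynomial, so it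
meets each subspace of codimension two evenly, which gives `F 0 + F u + F v + F (u + v) ≡ 0`
modulo `8`. Hence `u ↦ [F u ≢ wt f mod 8]` is a linear form `u ⬝ᵥ w`. For `wt f = 4` this makes
`F u ∈ {0, ±4}` according to `u ⬝ᵥ w`, contradicting Parseval. For `wt f ≡ 2 mod 4` the
Walsh coefficients `G u` of the translate `f (· + w)` are all `≡ wt f mod 8` and at most `wt f`
in absolute value; for `wt f ∈ {2, 6, 10}` they then take at most three values, which is
incompatible with the moments `∑ G = 2 ^ m f w`, `∑ G² = 2 ^ m wt f` and `∑ G³ ≥ 0`.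
Complementation excludes the weights `2 ^ m - 2, …, 2 ^ m - 10` as well.

Conversely the `(f | g)` construction gives `spec r m + spec r m ⊆ spec (r + 1) (m + 1)`, the
claimed spectrum for length `2 ^ (m + 1)` is a sumset of the one for length `2 ^ m`, and for
`m = 6` explicit cubics realize every weight up to `32`.
-/

open MvPolynomial Pointwise

/-- The binary Reed-Muller code of order `r` in `m` variables, viewed as the set of
Boolean functions represented by polynomials of total degree at most `r`. -/
def RM (r m : ℕ) : Set ((Fin m → ZMod 2) → ZMod 2) :=
  {f | ∃ p : MvPolynomial (Fin m) (ZMod 2), p.totalDegree ≤ r ∧ ∀ x, eval x p = f x}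

/-- Hamming weight of a Boolean function: number of inputs where it is nonzero. -/
def wt {m : ℕ} (f : (Fin m → ZMod 2) → ZMod 2) : ℕ :=
  Fintype.card {x // f x ≠ 0}

/-- Weight spectrum of `RM(r,m)`. -/
def spec (r m : ℕ) : Set ℕ := {w | ∃ f ∈ RM r m, wt f = w}

open Finset

lemma zmod_two_eq_zero_or_one (a : ZMod 2) : a = 0 ∨ a = 1 := by
  revert a
  decide

section Walsh

variable {m : ℕ}

def sgn (a : ZMod 2) : ℤ := 1 - 2 * (a.val : ℤ)

@[simp] lemma sgn_zero : sgn 0 = 1 := rfl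

lemma sgn_add (a b : ZMod 2) : sgn (a + b) = sgn a * sgn b := by revert a b; decide

lemma sgn_mul_self (a : ZMod 2) : sgn a * sgn a = 1 := by revert a; decide

lemma sgn_sum {ι : Type*} (s : Finset ι) (g : ι → ZMod 2) :
    sgn (∑ i ∈ s, g i) = ∏ i ∈ s, sgn (g i) := by
  induction s using Finset.cons_induction with
  | empty => rfl
  | cons i s hi ih => rw [sum_cons, prod_cons, sgn_add, ih]

lemma sum_sgn_dotProduct (z : Fin m → ZMod 2) :
    ∑ u : Fin m → ZMod 2, sgn (u ⬝ᵥ z) = if z = 0 then 2 ^ m else 0 := by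
  simp only [dotProduct, sgn_sum]
  rw [← Fintype.piFinset_univ, ← prod_univ_sum (fun _ => univ) (fun i b => sgn (b * z i))]
  have sum_coord (c : ZMod 2) : ∑ b : ZMod 2, sgn (b * c) = if c = 0 then 2 else 0 := by
    revert c; decide
  simp only [sum_coord]
  by_cases hz : z = 0
  · simp [hz]
  · obtain ⟨i, hi⟩ := Function.ne_iff.mp hz
    rw [prod_eq_zero (mem_univ i) (if_neg hi), if_neg hz]

def walsh (F : (Fin m → ZMod 2) → ℤ) (u : Fin m → ZMod 2) : ℤ :=
  ∑ x, F x * sgn (u ⬝ᵥ x)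

-- Since `-z = z`, this is both the correlation and the convolution of `F` and `G`.
def conv (F G : (Fin m → ZMod 2) → ℤ) (z : Fin m → ZMod 2) : ℤ :=
  ∑ x, F x * G (x + z)

lemma walsh_mul_walsh (F G : (Fin m → ZMod 2) → ℤ) (u : Fin m → ZMod 2) :
    walsh F u * walsh G u = walsh (conv F G) u := by
  have shift (x : Fin m → ZMod 2) :
      ∑ y, G y * sgn (u ⬝ᵥ y) = ∑ z, G (x + z) * sgn (u ⬝ᵥ (x + z)) :=
    (Equiv.sum_comp (Equiv.addLeft x) fun y => G y * sgn (u ⬝ᵥ y)).symm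
  simp only [walsh, conv, sum_mul]
  conv_rhs => rw [sum_comm]
  refine sum_congr rfl fun x _ => ?_
  rw [shift x, mul_sum]
  refine sum_congr rfl fun z _ => ?_
  rw [dotProduct_add, sgn_add]
  linear_combination F x * G (x + z) * sgn (u ⬝ᵥ z) * sgn_mul_self (u ⬝ᵥ x)

lemma sum_walsh (F : (Fin m → ZMod 2) → ℤ) :
    ∑ u, walsh F u = 2 ^ m * F 0 := by
  simp only [walsh]
  rw [sum_comm]
  simp [← mul_sum, sum_sgn_dotProduct, mul_comm]

lemma walsh_comp_add (F : (Fin m → ZMod 2) → ℤ) (u w : Fin m → ZMod 2) :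
    walsh (fun x => F (x + w)) u = sgn (u ⬝ᵥ w) * walsh F u := by
  simp only [walsh, mul_sum]
  rw [← Equiv.sum_comp (Equiv.addRight w) fun y => sgn (u ⬝ᵥ w) * (F y * sgn (u ⬝ᵥ y))]
  refine sum_congr rfl fun x _ => ?_
  simp only [Equiv.coe_addRight, dotProduct_add, sgn_add]
  linear_combination -F (x + w) * sgn (u ⬝ᵥ x) * sgn_mul_self (u ⬝ᵥ w)

lemma sum_walsh_sq (F : (Fin m → ZMod 2) → ℤ) :
    ∑ u, walsh F u ^ 2 = 2 ^ m * ∑ x, F x ^ 2 := by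
  simp only [sq, walsh_mul_walsh, sum_walsh, conv, add_zero]

lemma sum_walsh_pow_three_nonneg {F : (Fin m → ZMod 2) → ℤ} (hF : 0 ≤ F) :
    0 ≤ ∑ u, walsh F u ^ 3 := by
  have conv_nonneg {G H : (Fin m → ZMod 2) → ℤ} (hG : 0 ≤ G) (hH : 0 ≤ H) : 0 ≤ conv G H :=
    fun z => sum_nonneg fun x _ => mul_nonneg (hG x) (hH _)
  simp only [pow_three', walsh_mul_walsh, sum_walsh]
  exact mul_nonneg (by positivity) (conv_nonneg (conv_nonneg hF hF) hF 0)

end Walsh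

section BooleanFunction

variable {m : ℕ}

def intVal (f : (Fin m → ZMod 2) → ZMod 2) (x : Fin m → ZMod 2) : ℤ := (f x).val

lemma intVal_nonneg (f : (Fin m → ZMod 2) → ZMod 2) : 0 ≤ intVal f :=
  fun _ => Int.natCast_nonneg _

lemma wt_eq_sum_intVal (f : (Fin m → ZMod 2) → ZMod 2) : (wt f : ℤ) = ∑ x, intVal f x := by
  rw [wt, Fintype.card_subtype, card_eq_sum_ones, sum_filter]
  push_cast
  refine sum_congr rfl fun x _ => ?_
  unfold intVal
  generalize f x = c
  revert c
  decide

lemma intCast_sum_intVal_mul (f : (Fin m → ZMod 2) → ZMod 2) (c : (Fin m → ZMod 2) → ℤ) :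
    ((∑ x, intVal f x * c x : ℤ) : ZMod 2) = ∑ x, f x * (c x : ZMod 2) := by
  push_cast
  simp [intVal]

lemma walsh_intVal_zero (f : (Fin m → ZMod 2) → ZMod 2) : walsh (intVal f) 0 = wt f := by
  simp [walsh, wt_eq_sum_intVal]

lemma abs_walsh_intVal_le (f : (Fin m → ZMod 2) → ZMod 2) (u : Fin m → ZMod 2) :
    |walsh (intVal f) u| ≤ wt f := by
  rw [wt_eq_sum_intVal]
  refine (abs_sum_le_sum_abs _ _).trans (sum_le_sum fun x _ => ?_)
  unfold intVal
  generalize f x = c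
  generalize u ⬝ᵥ x = a
  revert c a
  decide

lemma sum_walsh_intVal_sq (f : (Fin m → ZMod 2) → ZMod 2) :
    ∑ u, walsh (intVal f) u ^ 2 = 2 ^ m * wt f := by
  rw [sum_walsh_sq, wt_eq_sum_intVal]
  congr 1
  refine sum_congr rfl fun x _ => ?_
  unfold intVal
  generalize f x = c
  revert c
  decide

lemma wt_comp_add (f : (Fin m → ZMod 2) → ZMod 2) (w : Fin m → ZMod 2) :
    wt (fun x => f (x + w)) = wt f :=
  Fintype.card_congr ((Equiv.addRight w).subtypeEquiv fun _ => Iff.rfl)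

lemma wt_le (f : (Fin m → ZMod 2) → ZMod 2) : wt f ≤ 2 ^ m := by
  have := Fintype.card_subtype_le fun x => f x ≠ 0
  rwa [Fintype.card_fun, ZMod.card, Fintype.card_fin] at this

lemma wt_one_add (f : (Fin m → ZMod 2) → ZMod 2) :
    wt (fun x => 1 + f x) = 2 ^ m - wt f := by
  have one_add_ne_zero (c : ZMod 2) : 1 + c ≠ 0 ↔ ¬c ≠ 0 := by revert c; decide
  rw [wt, wt, Fintype.card_congr (Equiv.subtypeEquivRight fun x => one_add_ne_zero (f x)),
    Fintype.card_subtype_compl]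
  simp

noncomputable def linearPoly (u : Fin m → ZMod 2) : MvPolynomial (Fin m) (ZMod 2) :=
  ∑ i, C (u i) * X i

lemma eval_linearPoly (u x : Fin m → ZMod 2) : eval x (linearPoly u) = u ⬝ᵥ x := by
  simp [linearPoly, dotProduct]

lemma totalDegree_one_add_linearPoly_le (u : Fin m → ZMod 2) :
    (1 + linearPoly u).totalDegree ≤ 1 := by
  refine (totalDegree_add _ _).trans (max_le (by simp) ?_)
  refine (totalDegree_finsetSum _ _).trans (Finset.sup_le fun i _ => ?_)
  exact (totalDegree_mul _ _).trans (by simp [totalDegree_C, totalDegree_X])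

def monomialSum (L : List (List (Fin m))) (x : Fin m → ZMod 2) : ZMod 2 :=
  (L.map fun l => (l.map x).prod).sum

def concat (f g : (Fin m → ZMod 2) → ZMod 2) (x : Fin (m + 1) → ZMod 2) : ZMod 2 :=
  (1 + x 0) * f (Fin.tail x) + x 0 * g (Fin.tail x)

lemma wt_concat (f g : (Fin m → ZMod 2) → ZMod 2) : wt (concat f g) = wt f + wt g := by
  zify
  simp only [wt_eq_sum_intVal]
  rw [← Equiv.sum_comp (Fin.consEquiv fun _ => ZMod 2), Fintype.sum_prod_type]
  have sum_zmod_two (h : ZMod 2 → ℤ) : ∑ b, h b = h 0 + h 1 := by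
    rw [show (univ : Finset (ZMod 2)) = {0, 1} by decide, sum_pair (by decide)]
  refine (sum_zmod_two _).trans ?_
  simp [concat, intVal, Fin.consEquiv, show (1 + 1 : ZMod 2) = 0 from rfl]

end BooleanFunction

lemma sum_cubic_eq_zero {ι : Type*} [Fintype ι] (a : ι → ℤ) (c₀ c₁ c₂ c₃ : ℤ)
    (h : ∀ i, c₃ * a i ^ 3 + c₂ * a i ^ 2 + c₁ * a i + c₀ = 0) :
    c₃ * ∑ i, a i ^ 3 + c₂ * ∑ i, a i ^ 2 + c₁ * ∑ i, a i + c₀ * Fintype.card ι = 0 := by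
  simpa [sum_add_distrib, mul_sum, mul_comm] using sum_eq_zero fun i (_ : i ∈ univ) => h i

lemma false_of_walsh_moments {ι : Type*} [Fintype ι] [Nonempty ι] (a : ι → ℤ) {s : ℤ}
    (hs : s = 2 ∨ s = 6 ∨ s = 10) (habs : ∀ i, |a i| ≤ s) (hmod : ∀ i, (8 : ℤ) ∣ a i - s)
    (h1 : ∑ i, a i = 0 ∨ ∑ i, a i = Fintype.card ι)
    (h2 : ∑ i, a i ^ 2 = Fintype.card ι * s) (h3 : 0 ≤ ∑ i, a i ^ 3) : False := by
  -- In each case `a` takes at most three values, and the cubic vanishing on them gives a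
  -- linear relation between the moments.
  have hn : (0 : ℤ) < Fintype.card ι := mod_cast Fintype.card_pos
  have hbounds (i : ι) := abs_le.mp (habs i)
  rcases hs with rfl | rfl | rfl
  · have hval (i : ι) : a i = 2 := by have := hbounds i; have := hmod i; omega
    have := sum_cubic_eq_zero a (-2) 1 0 0 fun i => by rw [hval i]; ring
    rcases h1 with h1 | h1 <;> linarith
  · have hval (i : ι) : a i = 6 ∨ a i = -2 := by have := hbounds i; have := hmod i; omega
    have := sum_cubic_eq_zero a (-12) (-4) 1 0 fun i => by
      rcases hval i with h | h <;> rw [h] <;> ring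
    rcases h1 with h1 | h1 <;> linarith
  · have hval (i : ι) : a i = 10 ∨ a i = 2 ∨ a i = -6 := by
      have := hbounds i; have := hmod i; omega
    have := sum_cubic_eq_zero a 120 (-52) (-6) 1 fun i => by
      rcases hval i with h | h | h <;> rw [h] <;> ring
    rcases h1 with h1 | h1 <;> linarith

section ReedMuller

variable {r m : ℕ} {f : (Fin m → ZMod 2) → ZMod 2}

lemma sum_mul_eval_eq_zero (hf : f ∈ RM r m) {s : ℕ} {q : MvPolynomial (Fin m) (ZMod 2)}
    (hq : q.totalDegree ≤ s) (hrs : r + s < m) : ∑ x, f x * eval x q = 0 := by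
  obtain ⟨p, hp, hpf⟩ := hf
  simp only [← hpf, ← map_mul]
  refine MvPolynomial.sum_eval_eq_zero (p * q) ?_
  simp only [ZMod.card, Fintype.card_fin]
  linarith [totalDegree_mul p q]

lemma even_wt (hf : f ∈ RM r m) (hrm : r < m) : Even (wt f) := by
  have hsum : ∑ x, f x * eval x (1 : MvPolynomial (Fin m) (ZMod 2)) = 0 :=
    sum_mul_eval_eq_zero hf (s := 0) (by simp) (by omega)
  have hcast := intCast_sum_intVal_mul f 1
  simp only [Pi.one_apply, mul_one, Int.cast_one, map_one] at hcast hsum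
  rw [← ZMod.natCast_eq_zero_iff_even, ← Int.cast_natCast, wt_eq_sum_intVal, hcast, hsum]

lemma eight_dvd_walsh_add (hf : f ∈ RM r m) (hrm : r + 2 < m) (u v : Fin m → ZMod 2) :
    (8 : ℤ) ∣ walsh (intVal f) 0 + walsh (intVal f) u + walsh (intVal f) v
      + walsh (intVal f) (u + v) := by
  set N : ℤ := ∑ x, intVal f x * ((if u ⬝ᵥ x = 0 then 1 else 0) * if v ⬝ᵥ x = 0 then 1 else 0)
  have sgn_four (a b : ZMod 2) : sgn 0 + sgn a + sgn b + sgn (a + b)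
      = 4 * ((if a = 0 then 1 else 0) * if b = 0 then 1 else 0) := by revert a b; decide
  have hsum : walsh (intVal f) 0 + walsh (intVal f) u + walsh (intVal f) v
      + walsh (intVal f) (u + v) = 4 * N := by
    simp only [walsh, ← sum_add_distrib, mul_sum, N]
    refine sum_congr rfl fun x _ => ?_
    rw [add_dotProduct, zero_dotProduct]
    linear_combination intVal f x * sgn_four (u ⬝ᵥ x) (v ⬝ᵥ x)
  -- `N` pairs `f` with the quadratic `(1 + u ⬝ᵥ x) * (1 + v ⬝ᵥ x)`.
  have hN : (2 : ℤ) ∣ N := by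
    have hq : ((1 + linearPoly u) * (1 + linearPoly v)).totalDegree ≤ 2 :=
      (totalDegree_mul _ _).trans (add_le_add (totalDegree_one_add_linearPoly_le u)
        (totalDegree_one_add_linearPoly_le v))
    have hzero := sum_mul_eval_eq_zero hf hq hrm
    refine (ZMod.intCast_zmod_eq_zero_iff_dvd N 2).mp ?_
    rw [intCast_sum_intVal_mul]
    refine (sum_congr rfl fun x _ => ?_).trans hzero
    simp only [map_mul, map_add, map_one, eval_linearPoly]
    generalize f x = c
    generalize u ⬝ᵥ x = a
    generalize v ⬝ᵥ x = b
    revert a b c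
    decide
  omega

lemma four_dvd_walsh_sub_wt (hf : f ∈ RM r m) (hrm : r + 2 < m) (u : Fin m → ZMod 2) :
    (4 : ℤ) ∣ walsh (intVal f) u - wt f := by
  have h8 := eight_dvd_walsh_add hf hrm u 0
  have heven : (2 : ℤ) ∣ wt f := by exact_mod_cast (even_wt hf (by omega)).two_dvd
  rw [add_zero, walsh_intVal_zero] at h8
  omega

lemma exists_dotProduct_eq_zero_iff (hf : f ∈ RM r m) (hrm : r + 2 < m) :
    ∃ w : Fin m → ZMod 2, ∀ u, u ⬝ᵥ w = 0 ↔ (8 : ℤ) ∣ walsh (intVal f) u - wt f := by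
  let φ : (Fin m → ZMod 2) →+ ZMod 2 :=
    { toFun u := if (8 : ℤ) ∣ walsh (intVal f) u - wt f then 0 else 1
      map_zero' := by simp [walsh_intVal_zero]
      map_add' u v := by
        have h8 := eight_dvd_walsh_add hf hrm u v
        have h4u := four_dvd_walsh_sub_wt hf hrm u
        have h4v := four_dvd_walsh_sub_wt hf hrm v
        have h4uv := four_dvd_walsh_sub_wt hf hrm (u + v)
        have heven : (2 : ℤ) ∣ wt f := by exact_mod_cast (even_wt hf (by omega)).two_dvd
        rw [walsh_intVal_zero] at h8
        split_ifs <;> first | decide | omega }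
  refine ⟨fun i => φ fun j => if i = j then 1 else 0, fun u => ?_⟩
  have hφ : φ u = u ⬝ᵥ fun i => φ fun j => if i = j then 1 else 0 :=
    (φ.toZModLinearMap 2).pi_apply_eq_sum_univ u
  rw [← hφ]
  simp [φ]

lemma wt_ne_four (hf : f ∈ RM r m) (hrm : r + 2 < m) : wt f ≠ 4 := by
  intro hwt
  obtain ⟨w, hw⟩ := exists_dotProduct_eq_zero_iff hf hrm
  have hsq (u : Fin m → ZMod 2) : walsh (intVal f) u ^ 2 = 8 * (1 + sgn (u ⬝ᵥ w)) := by
    have hbounds := abs_le.mp (abs_walsh_intVal_le f u)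
    have h4 := four_dvd_walsh_sub_wt hf hrm u
    have h8 := hw u
    rw [hwt] at hbounds h4 h8
    push_cast at hbounds h4 h8
    rcases zmod_two_eq_zero_or_one (u ⬝ᵥ w) with h | h <;> rw [h] at h8 ⊢
    · obtain h | h : walsh (intVal f) u = 4 ∨ walsh (intVal f) u = -4 := by simp at h8; omega
      all_goals rw [h]; rfl
    · rw [show walsh (intVal f) u = 0 by simp at h8; omega]; rfl
  have hparseval := sum_walsh_intVal_sq f
  simp only [hsq, hwt, ← mul_sum, sum_add_distrib, sum_sgn_dotProduct] at hparseval
  have hn : (0 : ℤ) < 2 ^ m := by positivity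
  split_ifs at hparseval <;> simp at hparseval <;> linarith

lemma exists_wt_eq_forall_eight_dvd_walsh_sub (hf : f ∈ RM r m) (hrm : r + 2 < m)
    (hwt : wt f % 4 = 2) :
    ∃ g : (Fin m → ZMod 2) → ZMod 2, wt g = wt f ∧ ∀ u, (8 : ℤ) ∣ walsh (intVal g) u - wt f := by
  obtain ⟨w, hw⟩ := exists_dotProduct_eq_zero_iff hf hrm
  refine ⟨fun x => f (x + w), wt_comp_add f w, fun u => ?_⟩
  have h4 := four_dvd_walsh_sub_wt hf hrm u
  have h8 := hw u
  have hwt' : (wt f : ℤ) % 4 = 2 := by exact_mod_cast hwt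
  rw [show intVal (fun x => f (x + w)) = fun x => intVal f (x + w) from rfl, walsh_comp_add]
  rcases zmod_two_eq_zero_or_one (u ⬝ᵥ w) with h | h <;> rw [h] at h8 ⊢
  · simpa using h8
  · simp only [one_ne_zero, false_iff] at h8
    rw [show sgn 1 = -1 from rfl]
    -- `walsh u ≡ wt f + 4 [ZMOD 8]`, and `-(wt f + 4) ≡ wt f` because `wt f ≡ 2 [ZMOD 4]`.
    omega

lemma wt_notMem_two_four_six_ten (hf : f ∈ RM r m) (hrm : r + 2 < m) :
    wt f ∉ ({2, 4, 6, 10} : Set ℕ) := by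
  intro hs
  obtain h4 | hs :
      wt f = 4 ∨ wt f % 4 = 2 ∧ ((wt f : ℤ) = 2 ∨ (wt f : ℤ) = 6 ∨ (wt f : ℤ) = 10) := by
    simp only [Set.mem_insert_iff, Set.mem_singleton_iff] at hs
    omega
  · exact wt_ne_four hf hrm h4
  obtain ⟨g, hg, hdvd⟩ := exists_wt_eq_forall_eight_dvd_walsh_sub hf hrm hs.1
  have hcard : (Fintype.card (Fin m → ZMod 2) : ℤ) = 2 ^ m := by simp
  refine false_of_walsh_moments (walsh (intVal g)) hs.2 (fun u => ?_) hdvd ?_ ?_ ?_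
  · exact hg ▸ abs_walsh_intVal_le g u
  · rw [sum_walsh, hcard]
    rcases zmod_two_eq_zero_or_one (g 0) with h | h <;> simp [intVal, h, ZMod.val_one]
  · rw [sum_walsh_intVal_sq, hcard, hg]
  · exact sum_walsh_pow_three_nonneg (intVal_nonneg g)

lemma one_add_mem_RM (hf : f ∈ RM r m) :
    (fun x => 1 + f x) ∈ RM r m := by
  obtain ⟨p, hp, hpf⟩ := hf
  exact ⟨1 + p, (totalDegree_add _ _).trans (max_le (by simp) hp), by simp [hpf]⟩

lemma two_pow_sub_mem_spec {w : ℕ} (hw : w ∈ spec r m) : 2 ^ m - w ∈ spec r m := by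
  obtain ⟨f, hf, rfl⟩ := hw
  exact ⟨_, one_add_mem_RM hf, wt_one_add f⟩

lemma concat_mem_RM {g : (Fin m → ZMod 2) → ZMod 2} (hf : f ∈ RM r m) (hg : g ∈ RM r m) :
    concat f g ∈ RM (r + 1) (m + 1) := by
  obtain ⟨p, hp, hpf⟩ := hf
  obtain ⟨q, hq, hqg⟩ := hg
  refine ⟨(1 + X 0) * rename Fin.succ p + X 0 * rename Fin.succ q, ?_, fun x => ?_⟩
  · have hX : (X 0 : MvPolynomial (Fin (m + 1)) (ZMod 2)).totalDegree ≤ 1 := by simp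
    have hp' := (totalDegree_rename_le Fin.succ p).trans hp
    have hq' := (totalDegree_rename_le Fin.succ q).trans hq
    refine (totalDegree_add _ _).trans (max_le ?_ ?_)
    · refine (totalDegree_mul _ _).trans ?_
      have := (totalDegree_add (1 : MvPolynomial (Fin (m + 1)) (ZMod 2)) (X 0)).trans
        (max_le (by simp) hX)
      omega
    · exact (totalDegree_mul _ _).trans (by omega)
  · simp [concat, eval_rename, ← hpf, ← hqg]
    rfl

lemma monomialSum_mem_RM (L : List (List (Fin m))) (hL : ∀ l ∈ L, l.length ≤ r) :
    monomialSum L ∈ RM r m := by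
  refine ⟨(L.map fun l => (l.map X).prod).sum, ?_, fun x => by simp [monomialSum, map_list_sum,
    map_list_prod, Function.comp_def]⟩
  induction L with
  | nil => simp
  | cons l L ih =>
    simp only [List.map_cons, List.sum_cons]
    refine (totalDegree_add _ _).trans (max_le ?_ (ih fun l' hl' => hL l' (by simp [hl'])))
    refine (totalDegree_list_prod _).trans ?_
    simpa [Function.comp_def] using hL l (by simp)

lemma spec_add_spec_subset : spec r m + spec r m ⊆ spec (r + 1) (m + 1) := by
  rintro _ ⟨_, ⟨f, hf, rfl⟩, _, ⟨g, hg, rfl⟩, rfl⟩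
  exact ⟨concat f g, concat_mem_RM hf hg, wt_concat f g⟩

lemma mem_spec_of_wt_monomialSum {w : ℕ} (L : List (List (Fin m))) (hL : ∀ l ∈ L, l.length ≤ r)
    (hw : wt (monomialSum L) = w) : w ∈ spec r m :=
  ⟨_, monomialSum_mem_RM L hL, hw⟩

end ReedMuller

def expectedSpec (N : ℕ) : Set ℕ :=
  ({0, 8} : Set ℕ) ∪ {w | Even w ∧ 12 ≤ w ∧ w ≤ N - 12} ∪ {N - 8, N}

lemma mem_expectedSpec {N w : ℕ} :
    w ∈ expectedSpec N ↔
      w = 0 ∨ w = 8 ∨ (w % 2 = 0 ∧ 12 ≤ w ∧ w ≤ N - 12) ∨ w = N - 8 ∨ w = N := by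
  simp only [expectedSpec, Set.mem_union, Set.mem_insert_iff, Set.mem_singleton_iff,
    Set.mem_ofPred_eq, Nat.even_iff]
  tauto

lemma spec_subset_expectedSpec {r m : ℕ} (hrm : r + 3 ≤ m) : spec r m ⊆ expectedSpec (2 ^ m) := by
  rintro _ ⟨f, hf, rfl⟩
  have heven := even_wt hf (by omega)
  have hle := wt_le f
  have hsmall := wt_notMem_two_four_six_ten hf (by omega)
  have hcompl := wt_notMem_two_four_six_ten (one_add_mem_RM hf) (by omega)
  rw [wt_one_add] at hcompl
  simp only [Set.mem_insert_iff, Set.mem_singleton_iff] at hsmall hcompl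
  have hN : 2 ∣ 2 ^ m := dvd_pow_self 2 (by omega)
  rw [Nat.even_iff] at heven
  rw [mem_expectedSpec]
  generalize 2 ^ m = N at *
  omega

lemma expectedSpec_two_mul_subset {N : ℕ} (hN : 64 ≤ N) (he : N % 2 = 0) :
    expectedSpec (2 * N) ⊆ expectedSpec N + expectedSpec N := by
  intro w hw
  have split (a b : ℕ) (ha : a ∈ expectedSpec N) (hb : b ∈ expectedSpec N) (hab : a + b = w) :
      w ∈ expectedSpec N + expectedSpec N := hab ▸ Set.add_mem_add ha hb
  simp only [mem_expectedSpec] at hw split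
  rcases hw with rfl | rfl | ⟨hw2, hw12, hwN⟩ | rfl | rfl
  · exact split 0 0 (by omega) (by omega) rfl
  · exact split 8 0 (by omega) (by omega) rfl
  · by_cases hlow : w ≤ N - 12
    · exact split w 0 (by omega) (by omega) (by omega)
    by_cases hmid : w < N + 12
    · exact split (w - 24) 24 (by omega) (by omega) (by omega)
    · exact split N (w - N) (by omega) (by omega) (by omega)
  · exact split N (N - 8) (by omega) (by omega) (by omega)
  · exact split N N (by omega) (by omega) (by omega)

lemma expectedSpec_sixtyFour_subset : expectedSpec 64 ⊆ spec 3 6 := by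
  have low (w : ℕ) (hw : w ∈ expectedSpec 64) (h32 : w ≤ 32) : w ∈ spec 3 6 := by
    rw [mem_expectedSpec] at hw
    obtain rfl | rfl | rfl | rfl | rfl | rfl | rfl | rfl | rfl | rfl | rfl | rfl | rfl :
        w = 0 ∨ w = 8 ∨ w = 12 ∨ w = 14 ∨ w = 16 ∨ w = 18 ∨ w = 20 ∨ w = 22 ∨ w = 24 ∨ w = 26
          ∨ w = 28 ∨ w = 30 ∨ w = 32 := by omega
    · exact mem_spec_of_wt_monomialSum [] (by decide) (by decide)
    · exact mem_spec_of_wt_monomialSum [[0, 1, 2]] (by decide) (by decide)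
    · exact mem_spec_of_wt_monomialSum [[0, 1, 2], [0, 3, 4]] (by decide) (by decide)
    · exact mem_spec_of_wt_monomialSum [[0, 1, 2], [3, 4, 5]] (by decide) (by decide)
    · exact mem_spec_of_wt_monomialSum [[0, 1]] (by decide) (by decide)
    · exact mem_spec_of_wt_monomialSum [[0, 1], [0, 2, 3], [1, 4, 5]] (by decide) (by decide)
    · exact mem_spec_of_wt_monomialSum [[0, 1], [2, 3, 4]] (by decide) (by decide)
    · exact mem_spec_of_wt_monomialSum [[0], [0, 1], [0, 2, 3], [1, 4, 5]] (by decide) (by decide)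
    · exact mem_spec_of_wt_monomialSum [[0], [0, 1, 2]] (by decide) (by decide)
    · exact mem_spec_of_wt_monomialSum [[0], [0, 1, 2], [3, 4, 5]] (by decide) (by decide)
    · exact mem_spec_of_wt_monomialSum [[0], [1, 2], [0, 3, 4]] (by decide) (by decide)
    · exact mem_spec_of_wt_monomialSum [[0], [1], [0, 2, 3], [1, 4, 5]] (by decide) (by decide)
    · exact mem_spec_of_wt_monomialSum [[0]] (by decide) (by decide)
  intro w hw
  by_cases h32 : w ≤ 32
  · exact low w hw h32
  have hw' := hw
  rw [mem_expectedSpec] at hw'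
  have hcompl := two_pow_sub_mem_spec (low (64 - w) (mem_expectedSpec.mpr (by omega)) (by omega))
  rwa [show 2 ^ 6 - (64 - w) = w by omega] at hcompl

lemma expectedSpec_subset_spec {m : ℕ} (hm : 6 ≤ m) : expectedSpec (2 ^ m) ⊆ spec (m - 3) m := by
  induction m, hm using Nat.le_induction with
  | base => exact expectedSpec_sixtyFour_subset
  | succ m hm ih =>
    have h64 : 64 ≤ 2 ^ m := by
      simpa using Nat.pow_le_pow_right (show 0 < 2 by norm_num) hm
    calc expectedSpec (2 ^ (m + 1)) = expectedSpec (2 * 2 ^ m) := by rw [pow_succ']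
      _ ⊆ expectedSpec (2 ^ m) + expectedSpec (2 ^ m) :=
        expectedSpec_two_mul_subset h64 (Nat.two_pow_mod_two_eq_zero.mpr (by omega))
      _ ⊆ spec (m - 3) m + spec (m - 3) m := Set.add_subset_add ih ih
      _ ⊆ spec (m - 3 + 1) (m + 1) := spec_add_spec_subset
      _ = spec (m + 1 - 3) (m + 1) := by rw [show m - 3 + 1 = m + 1 - 3 by omega]

theorem spec_RM_m_sub_3 (m : ℕ) (hm : 6 ≤ m) :
    spec (m - 3) m =
      ({0, 8} : Set ℕ) ∪ {w | Even w ∧ 12 ≤ w ∧ w ≤ 2 ^ m - 12} ∪ {2 ^ m - 8, 2 ^ m} :=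
  (spec_subset_expectedSpec (by omega)).antisymm (expectedSpec_subset_spec hm)
end

section
/- Let A = {0,8} ∪ {12,14,...,2^m−12} ∪ {2^m−8, 2^m} (where the middle set is all even integers from 12 to 2^m−12), with m ≥ 6. Then A + A ⊇ {0,8} ∪ {12,14,...,2^{m+1}−12} ∪ {2^{m+1}−8, 2^{m+1}} (the middle set being all even integers from 12 to 2^{m+1}−12). -/
open Pointwise

theorem inductive_step_m_sub_3 (m : ℕ) (hm : 6 ≤ m)
    (A : Set ℕ)
    (hA : A = ({0, 8} : Set ℕ) ∪ {w | Even w ∧ 12 ≤ w ∧ w ≤ 2 ^ m - 12} ∪ {2 ^ m - 8, 2 ^ m}) :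
    (({0, 8} : Set ℕ) ∪ {w | Even w ∧ 12 ≤ w ∧ w ≤ 2 ^ (m + 1) - 12} ∪
        {2 ^ (m + 1) - 8, 2 ^ (m + 1)}) ⊆ A + A := by
  subst hA
  intro w hw
  set n := 2 ^ m with hn_def
  have hn : 64 ≤ n := by
    calc (64 : ℕ) = 2 ^ 6 := by norm_num
    _ ≤ 2 ^ m := Nat.pow_le_pow_right (by norm_num) hm
  have hne : n % 2 = 0 := by
    have : n = 2 * 2 ^ (m - 1) := by
      rw [hn_def, ← pow_succ']
      congr 1
      omega
    omega
  have h2n : 2 ^ (m + 1) = 2 * n := by rw [pow_succ]; ring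
  have hmemA : ∀ a : ℕ,
      (a = 0 ∨ a = 8 ∨ (Even a ∧ 12 ≤ a ∧ a ≤ n - 12) ∨ a = n - 8 ∨ a = n) →
      a ∈ (({0, 8} : Set ℕ) ∪ {w | Even w ∧ 12 ≤ w ∧ w ≤ n - 12} ∪ {n - 8, n}) := by
    intro a ha
    simp only [Set.mem_union, Set.mem_insert_iff, Set.mem_singleton_iff, Set.mem_setOf_eq]
    tauto
  rw [Set.mem_add]
  simp only [Set.mem_union, Set.mem_insert_iff, Set.mem_singleton_iff, Set.mem_setOf_eq,
    h2n] at hw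
  rcases hw with ((hw | hw) | ⟨hev, h12, hle⟩) | (hw | hw)
  · exact ⟨0, hmemA 0 (by tauto), 0, hmemA 0 (by tauto), by omega⟩
  · exact ⟨0, hmemA 0 (by tauto), 8, hmemA 8 (by tauto), by omega⟩
  · have hw2 : w % 2 = 0 := Nat.even_iff.mp hev
    by_cases h1 : w ≤ n - 12
    · exact ⟨0, hmemA 0 (by tauto), w,
        hmemA w (Or.inr (Or.inr (Or.inl ⟨hev, h12, h1⟩))), by omega⟩
    by_cases h2 : w < n
    · refine ⟨12, hmemA 12 ?_, w - 12, hmemA (w - 12) ?_, by omega⟩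
      · exact Or.inr (Or.inr (Or.inl ⟨by decide, by omega, by omega⟩))
      · exact Or.inr (Or.inr (Or.inl ⟨Nat.even_iff.mpr (by omega), by omega, by omega⟩))
    by_cases h3 : w ≤ 2 * n - 24
    · refine ⟨n - 12, hmemA (n - 12) ?_, w - (n - 12), hmemA (w - (n - 12)) ?_, by omega⟩
      · exact Or.inr (Or.inr (Or.inl ⟨Nat.even_iff.mpr (by omega), by omega, by omega⟩))
      · exact Or.inr (Or.inr (Or.inl ⟨Nat.even_iff.mpr (by omega), by omega, by omega⟩))
    · refine ⟨n, hmemA n (by tauto), w - n, hmemA (w - n) ?_, by omega⟩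
      exact Or.inr (Or.inr (Or.inl ⟨Nat.even_iff.mpr (by omega), by omega, by omega⟩))
  · exact ⟨n, hmemA n (by tauto), n - 8, hmemA (n - 8) (by tauto), by omega⟩
  · exact ⟨n, hmemA n (by tauto), n, hmemA n (by tauto), by omega⟩
end

section
/- Let A = {0,16,24} ∪ {28,30,...,2^m−28} ∪ {2^m−24, 2^m−16, 2^m} (where the middle set is all even integers from 28 to 2^m−28), with m ≥ 8. Then A + A ⊇ {0,16,24} ∪ {28,30,...,2^{m+1}−28} ∪ {2^{m+1}−24, 2^{m+1}−16, 2^{m+1}} (the middle set being all even integers from 28 to 2^{m+1}−28). -/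
open Pointwise

theorem inductive_step_m_sub_4 (m : ℕ) (hm : 8 ≤ m)
    (A : Set ℕ)
    (hA : A = ({0, 16, 24} : Set ℕ) ∪ {w | Even w ∧ 28 ≤ w ∧ w ≤ 2 ^ m - 28} ∪
      {2 ^ m - 24, 2 ^ m - 16, 2 ^ m}) :
    (({0, 16, 24} : Set ℕ) ∪ {w | Even w ∧ 28 ≤ w ∧ w ≤ 2 ^ (m + 1) - 28} ∪
        {2 ^ (m + 1) - 24, 2 ^ (m + 1) - 16, 2 ^ (m + 1)}) ⊆ A + A := by
  have hN : 256 ≤ 2 ^ m := by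
    calc (256 : ℕ) = 2 ^ 8 := by norm_num
    _ ≤ 2 ^ m := Nat.pow_le_pow_right (by norm_num) hm
  have h2 : 2 ^ (m + 1) = 2 ^ m + 2 ^ m := by ring
  obtain ⟨n, hn⟩ : Even (2 ^ m) := (Nat.even_pow.mpr ⟨even_two, by omega⟩)
  have h0 : (0 : ℕ) ∈ A := by rw [hA]; left; left; left; rfl
  have h16 : (16 : ℕ) ∈ A := by rw [hA]; left; left; right; left; rfl
  have h24 : (24 : ℕ) ∈ A := by rw [hA]; left; left; right; right; rfl
  have hmid : ∀ b, Even b → 28 ≤ b → b ≤ 2 ^ m - 28 → b ∈ A := by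
    intro b hb hb1 hb2; rw [hA]; left; right; exact ⟨hb, hb1, hb2⟩
  have hE1 : 2 ^ m - 24 ∈ A := by rw [hA]; right; left; rfl
  have hE2 : 2 ^ m - 16 ∈ A := by rw [hA]; right; right; left; rfl
  have hE3 : 2 ^ m ∈ A := by rw [hA]; right; right; right; rfl
  intro w hw
  rw [Set.mem_add]
  simp only [Set.mem_union, Set.mem_insert_iff, Set.mem_singleton_iff,
    Set.mem_setOf_eq] at hw
  rcases hw with ((h | h | h) | h) | (h | h | h)
  · exact ⟨0, h0, 0, h0, by omega⟩
  · exact ⟨0, h0, 16, h16, by omega⟩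
  · exact ⟨0, h0, 24, h24, by omega⟩
  · obtain ⟨⟨k, hk⟩, h28, hub⟩ := h
    by_cases c1 : w ≤ 2 ^ m - 28
    · exact ⟨w, hmid w ⟨k, hk⟩ h28 c1, 0, h0, by omega⟩
    by_cases c2 : w ≤ 2 ^ m
    · exact ⟨28, hmid 28 ⟨14, rfl⟩ le_rfl (by omega),
        w - 28, hmid _ ⟨k - 14, by omega⟩ (by omega) (by omega), by omega⟩
    by_cases c3 : w ≤ 2 ^ m + 2 ^ m - 56
    · exact ⟨2 ^ m - 28, hmid _ ⟨n - 14, by omega⟩ (by omega) le_rfl,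
        w - (2 ^ m - 28), hmid _ ⟨k - n + 14, by omega⟩ (by omega) (by omega), by omega⟩
    · exact ⟨2 ^ m, hE3, w - 2 ^ m, hmid _ ⟨k - n, by omega⟩ (by omega) (by omega), by omega⟩
  · exact ⟨2 ^ m, hE3, 2 ^ m - 24, hE1, by omega⟩
  · exact ⟨2 ^ m, hE3, 2 ^ m - 16, hE2, by omega⟩
  · exact ⟨2 ^ m, hE3, 2 ^ m, hE3, by omega⟩
end

section
/- The weight spectrum of RM(m-2,m) (for m ≥ 2) is the set of all even integers in [0, 2^m] except 2 and 2^m − 2. -/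
open MvPolynomial Pointwise

/-!
A word of `RM(m-2,m)` is determined by its support `E ⊆ 𝔽₂ᵐ`, and the word lies in the code
exactly when it passes the parity checks of the dual code `RM(1,m)`: `|E|` is even and
`∑_{x ∈ E} x = 0`. Two distinct points never sum to zero, and since `∑_{x ∈ 𝔽₂ᵐ} x = 0` the
same holds for complements of zero-sum sets, which excludes the weights `2` and `2ᵐ - 2`.
Conversely, writing `𝔽₂ᵐ = 𝔽₂ᵐ⁻² × 𝔽₂²`, unions of `k` blocks `{z} × 𝔽₂²` realise every weight
`4k`, and removing from `k + 3` blocks three pairs whose differences are `(1,0)`, `(0,1)`,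
`(1,1)` realises `4k + 6`.
-/

open Finset

namespace RM

variable {m r : ℕ} {f : (Fin m → ZMod 2) → ZMod 2}

theorem one_mem : (fun _ => 1) ∈ RM r m :=
  ⟨1, by simp, fun _ => by simp⟩

theorem sum_eq_zero (hr : r < m) (hf : f ∈ RM r m) : ∑ x, f x = 0 := by
  obtain ⟨p, hp, hpf⟩ := hf
  simp_rw [← hpf]
  refine sum_eval_eq_zero p ?_
  simp only [ZMod.card, Nat.add_one_sub_one, Fintype.card_fin, one_mul]
  omega

theorem mul_coord_mem (hf : f ∈ RM r m) (j : Fin m) : (fun x => f x * x j) ∈ RM (r + 1) m := by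
  obtain ⟨p, hp, hpf⟩ := hf
  refine ⟨p * X j, (totalDegree_mul _ _).trans ?_, fun x => by simp [hpf]⟩
  rw [totalDegree_X]
  omega

theorem sum_smul_eq_zero (hr : r + 1 < m) (hf : f ∈ RM r m) : ∑ x, f x • x = 0 := by
  ext j
  simpa using sum_eq_zero hr (mul_coord_mem hf j)

end RM

section AlgebraicNormalForm

variable {m : ℕ}

def anfCoeff (f : (Fin m → ZMod 2) → ZMod 2) (T : Finset (Fin m)) : ZMod 2 :=
  ∑ a, f a * ∏ i ∈ Tᶜ, (a i + 1)

noncomputable def anf (f : (Fin m → ZMod 2) → ZMod 2) : MvPolynomial (Fin m) (ZMod 2) :=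
  ∑ T : Finset (Fin m), C (anfCoeff f T) * ∏ i ∈ T, X i

theorem eval_prod_X_add_C_add_one (a x : Fin m → ZMod 2) :
    eval x (∏ i, (X i + C (a i + 1))) = if x = a then 1 else 0 := by
  have h (u v : ZMod 2) : u + (v + 1) = if u = v then 1 else 0 := by revert u v; decide
  simp [h, prod_boole, funext_iff]

theorem anf_eq_sum_prod (f : (Fin m → ZMod 2) → ZMod 2) :
    anf f = ∑ a, C (f a) * ∏ i, (X i + C (a i + 1)) := by
  simp_rw [prod_add, powerset_univ, mul_sum, anf, anfCoeff, map_sum, sum_mul]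
  rw [sum_comm]
  refine sum_congr rfl fun T _ => sum_congr rfl fun a _ => ?_
  simp only [map_mul, map_prod, compl_eq_univ_sdiff]
  ring

theorem eval_anf (f : (Fin m → ZMod 2) → ZMod 2) (x : Fin m → ZMod 2) :
    eval x (anf f) = f x := by
  simp only [anf_eq_sum_prod, map_sum, map_mul, eval_C, eval_prod_X_add_C_add_one, mul_ite,
    mul_one, mul_zero, sum_ite_eq, mem_univ, if_true]

theorem totalDegree_anf_le {f : (Fin m → ZMod 2) → ZMod 2} {r : ℕ}
    (h : ∀ T : Finset (Fin m), r < #T → anfCoeff f T = 0) : (anf f).totalDegree ≤ r := by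
  refine (totalDegree_finsetSum _ _).trans (Finset.sup_le fun T _ => ?_)
  by_cases hT : r < #T
  · simp [h T hT]
  · refine (totalDegree_mul _ _).trans ?_
    rw [totalDegree_C, zero_add]
    refine (totalDegree_finsetProd _ _).trans ?_
    simp only [totalDegree_X, sum_const, smul_eq_mul, mul_one]
    omega

theorem anfCoeff_eq_zero {f : (Fin m → ZMod 2) → ZMod 2} (h₀ : ∑ x, f x = 0)
    (h₁ : ∑ x, f x • x = 0) {T : Finset (Fin m)} (hT : m ≤ #T + 1) : anfCoeff f T = 0 := by
  have hTc : #Tᶜ ≤ 1 := by rw [card_compl, Fintype.card_fin]; omega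
  rcases Nat.le_one_iff_eq_zero_or_eq_one.mp hTc with hTc | hTc
  · simpa [anfCoeff, card_eq_zero.mp hTc] using h₀
  · obtain ⟨j, hj⟩ := card_eq_one.mp hTc
    have h₁j := congrFun h₁ j
    simp only [Finset.sum_apply, Pi.smul_apply, smul_eq_mul, Pi.zero_apply] at h₁j
    simp [anfCoeff, hj, mul_add, sum_add_distrib, h₀, h₁j]

end AlgebraicNormalForm

theorem mem_RM_sub_two_iff {m : ℕ} (hm : 2 ≤ m) (f : (Fin m → ZMod 2) → ZMod 2) :
    f ∈ RM (m - 2) m ↔ ∑ x, f x = 0 ∧ ∑ x, f x • x = 0 :=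
  ⟨fun hf => ⟨RM.sum_eq_zero (by omega) hf, RM.sum_smul_eq_zero (by omega) hf⟩,
    fun ⟨h₀, h₁⟩ => ⟨anf f, totalDegree_anf_le fun _ hT => anfCoeff_eq_zero h₀ h₁ (by omega),
      eval_anf f⟩⟩

section Support

variable {m : ℕ}

theorem exists_eq_indicator {α : Type*} [Fintype α] [DecidableEq α] (f : α → ZMod 2) :
    ∃ E : Finset α, f = fun x => if x ∈ E then 1 else 0 := by
  have h (u : ZMod 2) : u = if u ≠ 0 then 1 else 0 := by revert u; decide
  exact ⟨univ.filter (f · ≠ 0), funext fun x => by simpa using h (f x)⟩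

theorem wt_indicator (E : Finset (Fin m → ZMod 2)) :
    wt (fun x => if x ∈ E then (1 : ZMod 2) else 0) = #E := by
  simp [wt, Fintype.card_subtype]

theorem indicator_mem_RM_sub_two_iff (hm : 2 ≤ m) (E : Finset (Fin m → ZMod 2)) :
    (fun x => if x ∈ E then (1 : ZMod 2) else 0) ∈ RM (m - 2) m ↔
      Even #E ∧ ∑ x ∈ E, x = 0 := by
  simp [mem_RM_sub_two_iff hm, ite_smul, ZMod.natCast_eq_zero_iff_even]

theorem spec_sub_two_eq (hm : 2 ≤ m) :
    spec (m - 2) m =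
      {w | Even w ∧ ∃ E : Finset (Fin m → ZMod 2), #E = w ∧ ∑ x ∈ E, x = 0} := by
  ext w
  constructor
  · rintro ⟨f, hf, rfl⟩
    obtain ⟨E, rfl⟩ := exists_eq_indicator f
    obtain ⟨hE, hsum⟩ := (indicator_mem_RM_sub_two_iff hm E).mp hf
    exact ⟨by rwa [wt_indicator], E, (wt_indicator E).symm, hsum⟩
  · rintro ⟨hw, E, rfl, hsum⟩
    exact ⟨_, (indicator_mem_RM_sub_two_iff hm E).mpr ⟨hw, hsum⟩, wt_indicator E⟩

end Support

section ZeroSum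

variable {G : Type*} [AddCommGroup G] [Module (ZMod 2) G]

theorem Finset.card_ne_two_of_sum_eq_zero {E : Finset G} (hE : ∑ x ∈ E, x = 0) : #E ≠ 2 := by
  classical
  intro h2
  obtain ⟨a, b, hab, rfl⟩ := card_eq_two.mp h2
  rw [sum_pair hab, add_eq_zero_iff_eq_neg, ZModModule.neg_eq_self] at hE
  exact hab hE

theorem Finset.card_add_two_ne_of_sum_eq_zero [Fintype G] [DecidableEq G]
    (huniv : ∑ x : G, x = 0) {E : Finset G} (hE : ∑ x ∈ E, x = 0) :
    #E + 2 ≠ Fintype.card G := by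
  intro h
  refine card_ne_two_of_sum_eq_zero (E := Eᶜ) ?_ (by rw [card_compl]; omega)
  rwa [← sum_compl_add_sum E, hE, add_zero] at huniv

end ZeroSum

theorem exists_card_eq_sum_eq_zero_of_addEquiv {G H : Type*} [AddCommMonoid G] [AddCommMonoid H]
    (e : G ≃+ H) {w : ℕ} (h : ∃ E : Finset G, #E = w ∧ ∑ x ∈ E, x = 0) :
    ∃ E : Finset H, #E = w ∧ ∑ x ∈ E, x = 0 := by
  obtain ⟨E, hE, hsum⟩ := h
  exact ⟨E.map e.toEquiv.toEmbedding, by simpa using hE, by simp [sum_map, ← map_sum e, hsum]⟩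

section Blocks

variable {V : Type*} [AddCommGroup V] [Module (ZMod 2) V]

theorem sum_product_univ_eq_zero (Z : Finset V) :
    ∑ x ∈ Z ×ˢ (univ : Finset (Fin 2 → ZMod 2)), x = 0 := by
  have hK : ∑ y : Fin 2 → ZMod 2, y = 0 := by decide
  have h4 (x : V) : 4 • x = 0 := by
    rw [show 4 = 2 * 2 from rfl, mul_nsmul, ZModModule.char_nsmul_eq_zero]
  ext1
  · simp [Prod.fst_sum, sum_product, h4]
  · simp [Prod.snd_sum, sum_product, hK]

variable [Fintype V]

theorem exists_card_eq_four_mul_sum_eq_zero {k : ℕ} (hk : k ≤ Fintype.card V) :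
    ∃ E : Finset (V × (Fin 2 → ZMod 2)), #E = 4 * k ∧ ∑ x ∈ E, x = 0 := by
  obtain ⟨Z, -, hZ⟩ := exists_subset_card_eq (s := (univ : Finset V)) (by simpa using hk)
  exact ⟨Z ×ˢ univ, by simp [hZ, mul_comm], sum_product_univ_eq_zero Z⟩

theorem exists_card_eq_four_mul_add_six_sum_eq_zero [DecidableEq V] {k : ℕ}
    (hk : k + 3 ≤ Fintype.card V) :
    ∃ E : Finset (V × (Fin 2 → ZMod 2)), #E = 4 * k + 6 ∧ ∑ x ∈ E, x = 0 := by
  obtain ⟨S, -, hS⟩ := exists_subset_card_eq (s := (univ : Finset V)) (n := 3)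
    (by rw [card_univ]; omega)
  obtain ⟨U, hSU, -, hU⟩ := exists_subsuperset_card_eq (n := k + 3) (subset_univ S)
    (by omega) (by simpa using hk)
  obtain ⟨z₁, z₂, z₃, h₁₂, h₁₃, h₂₃, rfl⟩ := card_eq_three.mp hS
  set T : Finset (V × (Fin 2 → ZMod 2)) :=
    {(z₁, 0), (z₁, ![1, 0]), (z₂, 0), (z₂, ![0, 1]), (z₃, 0), (z₃, ![1, 1])}
  have hne : (0 : Fin 2 → ZMod 2) ≠ ![1, 0] ∧ (0 : Fin 2 → ZMod 2) ≠ ![0, 1] ∧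
      (0 : Fin 2 → ZMod 2) ≠ ![1, 1] := by decide
  have hTU : T ⊆ U ×ˢ univ := by
    simp only [insert_subset_iff, singleton_subset_iff] at hSU
    simp [T, insert_subset_iff, hSU]
  have hT : #T = 6 := by simp [T, card_insert_of_notMem, h₁₂, h₁₃, h₂₃, hne]
  have hTsum : ∑ x ∈ T, x = 0 := by
    simp [T, sum_insert, h₁₂, h₁₃, h₂₃, hne, ZModModule.add_self]
  refine ⟨U ×ˢ univ \ T, ?_, ?_⟩
  · rw [card_sdiff_of_subset hTU, card_product, hU, hT]
    simp only [card_univ, Fintype.card_pi, ZMod.card, prod_const, Fintype.card_fin, Nat.reducePow]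
    omega
  · have := sum_sdiff hTU (f := fun x => x)
    rwa [hTsum, add_zero, sum_product_univ_eq_zero] at this

theorem exists_card_eq_sum_eq_zero_prod [DecidableEq V] {w : ℕ} (hw : Even w)
    (hle : w ≤ 4 * Fintype.card V) (h₂ : w ≠ 2) (h₂' : w + 2 ≠ 4 * Fintype.card V) :
    ∃ E : Finset (V × (Fin 2 → ZMod 2)), #E = w ∧ ∑ x ∈ E, x = 0 := by
  have hw := Nat.even_iff.mp hw
  by_cases h4 : w % 4 = 0
  · obtain ⟨E, hE, hsum⟩ :=
      exists_card_eq_four_mul_sum_eq_zero (V := V) (k := w / 4) (by omega)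
    exact ⟨E, by omega, hsum⟩
  · obtain ⟨E, hE, hsum⟩ :=
      exists_card_eq_four_mul_add_six_sum_eq_zero (V := V) (k := (w - 6) / 4) (by omega)
    exact ⟨E, by omega, hsum⟩

end Blocks

def splitLastTwo {m : ℕ} (hm : 2 ≤ m) :
    (Fin (m - 2) → ZMod 2) × (Fin 2 → ZMod 2) ≃+ (Fin m → ZMod 2) :=
  ((LinearEquiv.funCongrLeft (ZMod 2) (ZMod 2)
      (finSumFinEquiv.trans (finCongr (by omega)))).trans
    (LinearEquiv.sumArrowLequivProdArrow _ _ _ _)).symm.toAddEquiv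

theorem spec_RM_m_sub_2 (m : ℕ) (hm : 2 ≤ m) :
    spec (m - 2) m = {w | Even w ∧ w ≤ 2 ^ m} \ {2, 2 ^ m - 2} := by
  have hcard : Fintype.card (Fin m → ZMod 2) = 2 ^ m := by simp
  have htwo : 2 ≤ 2 ^ m := Nat.le_self_pow (by omega) 2
  have hblocks : 4 * Fintype.card (Fin (m - 2) → ZMod 2) = 2 ^ m := by
    rw [← pow_sub_mul_pow 2 hm]
    simp [mul_comm]
  have huniv : ∑ x : Fin m → ZMod 2, x = 0 := by
    simpa using RM.sum_smul_eq_zero (by omega) (RM.one_mem (r := m - 2))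
  ext w
  rw [spec_sub_two_eq hm, ← hcard]
  simp only [Set.mem_ofPred_eq, Set.mem_sdiff, Set.mem_insert_iff, Set.mem_singleton_iff, not_or]
  constructor
  · rintro ⟨hw, E, rfl, hsum⟩
    exact ⟨⟨hw, card_le_univ E⟩, card_ne_two_of_sum_eq_zero hsum,
      fun h => card_add_two_ne_of_sum_eq_zero huniv hsum (by omega)⟩
  · rintro ⟨⟨hw, hle⟩, h₂, h₂'⟩
    exact ⟨hw, exists_card_eq_sum_eq_zero_of_addEquiv (splitLastTwo hm)
      (exists_card_eq_sum_eq_zero_prod hw (by omega) h₂ (by omega))⟩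
end
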